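/- For all n, k: ∑_{j=0}^{n} C(2n-j, j)·LS(j,k) = T(n+1, k+1), where LS are the Legendre-Stirling numbers and T are the central factorial numbers of the second kind. -/
import Mathlib

/-- Central factorial numbers of the second kind:
T(n,k) = T(n-1,k-1) + k² T(n-1,k), T(0,k)=[k=0], T(n,0)=[n=0]. -/
def centralFactorialT : ℕ → ℕ → ℕ
  | 0, 0 => 1
  | 0, _ + 1 => 0
  | _ + 1, 0 => 0
  | n + 1, k + 1 => centralFactorialT n k + (k + 1) ^ 2 * centralFactorialT n (k + 1)

/-- Legendre-Stirling numbers: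
LS(n,k) = LS(n-1,k-1) + k(k+1) LS(n-1,k), LS(0,k)=[k=0], LS(n,0)=[n=0]. -/
def legendreStirling : ℕ → ℕ → ℕ
  | 0, 0 => 1
  | 0, _ + 1 => 0
  | _ + 1, 0 => 0
  | n + 1, k + 1 => legendreStirling n k + (k + 1) * (k + 2) * legendreStirling n (k + 1)

lemma T_one (n : ℕ) : centralFactorialT (n + 1) 1 = 1 := by
  induction n with
  | zero => simp [centralFactorialT]
  | succ m ih =>
    have h : centralFactorialT (m + 2) 1
        = centralFactorialT (m + 1) 0 + 1 ^ 2 * centralFactorialT (m + 1) 1 := rfl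
    rw [h, ih]
    simp [centralFactorialT]

lemma sum_zero_S (n : ℕ) :
    ∑ j ∈ Finset.range (n + 1), (2 * n - j).choose j * legendreStirling j 0 = 1 := by
  rw [Finset.sum_eq_single_of_mem 0 (by simp)]
  · simp [legendreStirling]
  · rintro (_ | j) hj hne
    · exact absurd rfl hne
    · simp [legendreStirling]

lemma sum_zero_Q (n : ℕ) :
    ∑ j ∈ Finset.range (n + 1), (2 * n + 1 - j).choose j * legendreStirling j 0 = 1 := by
  rw [Finset.sum_eq_single_of_mem 0 (by simp)]
  · simp [legendreStirling]
  · rintro (_ | j) hj hne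
    · exact absurd rfl hne
    · simp [legendreStirling]

lemma stepS (n k : ℕ) :
    ∑ j ∈ Finset.range (n + 2), (2 * (n + 1) - j).choose j * legendreStirling j (k + 1)
    = (∑ j ∈ Finset.range (n + 1), (2 * n - j).choose j * legendreStirling j k)
      + (k + 1) * (k + 2) *
        (∑ j ∈ Finset.range (n + 1), (2 * n - j).choose j * legendreStirling j (k + 1))
      + (∑ j ∈ Finset.range (n + 1), (2 * n + 1 - j).choose j * legendreStirling j (k + 1)) := by
  rw [Finset.sum_range_succ']
  have h0 : (2 * (n + 1) - 0).choose 0 * legendreStirling 0 (k + 1) = 0 := by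
    simp [legendreStirling]
  rw [h0, add_zero]
  have hterm : ∀ i ∈ Finset.range (n + 1),
      (2 * (n + 1) - (i + 1)).choose (i + 1) * legendreStirling (i + 1) (k + 1)
      = ((2 * n - i).choose i
          * (legendreStirling i k + (k + 1) * (k + 2) * legendreStirling i (k + 1)))
        + ((2 * n + 1 - (i + 1)).choose (i + 1) * legendreStirling (i + 1) (k + 1)) := by
    intro i hi
    have hi' : i ≤ n := Nat.lt_succ_iff.mp (Finset.mem_range.mp hi)
    have h1 : 2 * (n + 1) - (i + 1) = (2 * n - i) + 1 := by omega
    have h2 : 2 * n + 1 - (i + 1) = 2 * n - i := by omega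
    rw [h1, h2, Nat.choose_succ_succ]
    have h3 : legendreStirling (i + 1) (k + 1)
        = legendreStirling i k + (k + 1) * (k + 2) * legendreStirling i (k + 1) := rfl
    rw [h3]; ring
  rw [Finset.sum_congr rfl hterm, Finset.sum_add_distrib]
  congr 1
  · rw [Finset.mul_sum, ← Finset.sum_add_distrib]
    exact Finset.sum_congr rfl fun i _ => by ring
  · -- ∑ g(i+1) over range (n+1) = ∑ g(j) over range (n+1), where g j = (2n+1-j).choose j * LS j (k+1)
    have := Finset.sum_range_succ' (fun j => (2 * n + 1 - j).choose j * legendreStirling j (k + 1)) (n + 1)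
    have g0 : (2 * n + 1 - 0).choose 0 * legendreStirling 0 (k + 1) = 0 := by
      simp [legendreStirling]
    rw [g0, add_zero] at this
    rw [← this, Finset.sum_range_succ]
    have gtop : (2 * n + 1 - (n + 1)).choose (n + 1) * legendreStirling (n + 1) (k + 1) = 0 := by
      rw [Nat.choose_eq_zero_of_lt (by omega), zero_mul]
    rw [gtop, add_zero]

lemma stepQ (n k : ℕ) :
    ∑ j ∈ Finset.range (n + 2), (2 * (n + 1) + 1 - j).choose j * legendreStirling j (k + 1)
    = (∑ j ∈ Finset.range (n + 1), (2 * n + 1 - j).choose j * legendreStirling j k)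
      + (k + 1) * (k + 2) *
        (∑ j ∈ Finset.range (n + 1), (2 * n + 1 - j).choose j * legendreStirling j (k + 1))
      + (∑ j ∈ Finset.range (n + 2), (2 * (n + 1) - j).choose j * legendreStirling j (k + 1)) := by
  rw [Finset.sum_range_succ']
  have h0 : (2 * (n + 1) + 1 - 0).choose 0 * legendreStirling 0 (k + 1) = 0 := by
    simp [legendreStirling]
  rw [h0, add_zero]
  have hterm : ∀ i ∈ Finset.range (n + 1),
      (2 * (n + 1) + 1 - (i + 1)).choose (i + 1) * legendreStirling (i + 1) (k + 1)
      = ((2 * n + 1 - i).choose i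
          * (legendreStirling i k + (k + 1) * (k + 2) * legendreStirling i (k + 1)))
        + ((2 * (n + 1) - (i + 1)).choose (i + 1) * legendreStirling (i + 1) (k + 1)) := by
    intro i hi
    have hi' : i ≤ n := Nat.lt_succ_iff.mp (Finset.mem_range.mp hi)
    have h1 : 2 * (n + 1) + 1 - (i + 1) = (2 * n + 1 - i) + 1 := by omega
    have h2 : 2 * (n + 1) - (i + 1) = 2 * n + 1 - i := by omega
    rw [h1, h2, Nat.choose_succ_succ]
    have h3 : legendreStirling (i + 1) (k + 1)
        = legendreStirling i k + (k + 1) * (k + 2) * legendreStirling i (k + 1) := rfl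
    rw [h3]; ring
  rw [Finset.sum_congr rfl hterm, Finset.sum_add_distrib]
  congr 1
  · rw [Finset.mul_sum, ← Finset.sum_add_distrib]
    exact Finset.sum_congr rfl fun i _ => by ring
  · have := Finset.sum_range_succ' (fun j => (2 * (n + 1) - j).choose j * legendreStirling j (k + 1)) (n + 1)
    have g0 : (2 * (n + 1) - 0).choose 0 * legendreStirling 0 (k + 1) = 0 := by
      simp [legendreStirling]
    rw [g0, add_zero] at this
    rw [← this]

lemma key (n : ℕ) : ∀ k : ℕ,
    (∑ j ∈ Finset.range (n + 1), (2 * n - j).choose j * legendreStirling j k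
      = centralFactorialT (n + 1) (k + 1))
    ∧ (∑ j ∈ Finset.range (n + 1), (2 * n + 1 - j).choose j * legendreStirling j k
      = (k + 1) * centralFactorialT (n + 1) (k + 1)) := by
  induction n with
  | zero =>
    rintro (_ | k)
    · constructor <;> simp [legendreStirling, centralFactorialT]
    · constructor <;> simp [legendreStirling, centralFactorialT]
  | succ m ih =>
    rintro (_ | k)
    · refine ⟨?_, ?_⟩
      · rw [sum_zero_S, T_one]
      · rw [sum_zero_Q, T_one]
    · have hS := (ih k).1
      have hS' := (ih (k + 1)).1
      have hQ := (ih k).2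
      have hQ' := (ih (k + 1)).2
      have hT : centralFactorialT (m + 2) (k + 2)
          = centralFactorialT (m + 1) (k + 1)
            + (k + 2) ^ 2 * centralFactorialT (m + 1) (k + 2) := rfl
      have eS : ∑ j ∈ Finset.range (m + 2),
          (2 * (m + 1) - j).choose j * legendreStirling j (k + 1)
          = centralFactorialT (m + 2) (k + 2) := by
        rw [stepS, hS, hS', hQ', hT]; ring
      refine ⟨eS, ?_⟩
      rw [stepQ, hQ, hQ', eS, hT]; ring

theorem sum_choose_legendreStirling (n k : ℕ) :
    ∑ j ∈ Finset.range (n + 1), (2 * n - j).choose j * legendreStirling j k =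
      centralFactorialT (n + 1) (k + 1) := by
  exact (key n k).1
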